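/- arXiv:2310.06194 — 5 statements merged into one kernel-verified Lean document; each statement's English description precedes it below -/
import Mathlib

section
/- Let h : ℝ^n → ℝ be a convex, nonnegative, continuously differentiable function whose gradient is L-Lipschitz. Then for all x, x' ∈ ℝ^n and every η > 0, h(x) - (1+η)·h(x') ≤ (L/2)·(1 + 1/η)·‖x - x'‖². -/
/-! The descent lemma `h b ≤ h a + ⟪∇h a, b - a⟫ + L/2 ‖b - a‖²` holds because, by the Lipschitz
bound on `∇h`, `t ↦ h (a + t (b - a)) - t ⟪∇h a, b - a⟫ - L t²/2 ‖b - a‖²` has nonpositive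
derivative for `t ≥ 0`. Applied to the gradient step `b = a - ∇h a / L` it gives, since `h b ≥ 0`,
`‖∇h a‖² ≤ 2 L h a` (for `L = 0`, letting the step length grow forces `∇h a = 0`). The descent
lemma from `x'` to `x`, Cauchy–Schwarz and the AM–GM bound
`‖∇h x'‖ ‖x - x'‖ ≤ η h x' + L/(2η) ‖x - x'‖²` then give the claim. -/

open RealInnerProductSpace Set
open scoped NNReal Gradient

section Descent

variable {E : Type*} [NormedAddCommGroup E] [InnerProductSpace ℝ E] [CompleteSpace E]
  {f : E → ℝ} {K : ℝ≥0}

theorem DifferentiableAt.hasDerivAt_comp_add_smul {a d : E} {t : ℝ}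
    (hf : DifferentiableAt ℝ f (a + t • d)) :
    HasDerivAt (fun s : ℝ => f (a + s • d)) ⟪∇ f (a + t • d), d⟫ t := by
  have hline : HasDerivAt (fun s : ℝ => a + s • d) d t := by
    simpa using ((hasDerivAt_id t).smul_const d).const_add a
  simpa only [Function.comp_def, InnerProductSpace.toDual_apply_apply] using
    hf.hasGradientAt.hasFDerivAt.comp_hasDerivAt t hline

theorem LipschitzWith.inner_gradient_add_smul_sub_le (hK : LipschitzWith K (∇ f)) (a d : E)
    {t : ℝ} (ht : 0 ≤ t) : ⟪∇ f (a + t • d) - ∇ f a, d⟫ ≤ K * t * ‖d‖ ^ 2 :=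
  calc ⟪∇ f (a + t • d) - ∇ f a, d⟫ ≤ ‖∇ f (a + t • d) - ∇ f a‖ * ‖d‖ := real_inner_le_norm _ _
    _ ≤ K * ‖t • d‖ * ‖d‖ := by
        gcongr
        simpa [dist_eq_norm] using hK.dist_le_mul (a + t • d) a
    _ = K * t * ‖d‖ ^ 2 := by rw [norm_smul, Real.norm_of_nonneg ht]; ring

theorem le_add_inner_gradient_add_sq_of_lipschitzWith (hf : Differentiable ℝ f)
    (hK : LipschitzWith K (∇ f)) (a b : E) :
    f b ≤ f a + ⟪∇ f a, b - a⟫ + K / 2 * ‖b - a‖ ^ 2 := by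
  set d := b - a with hd
  set c := ⟪∇ f a, d⟫
  set φ : ℝ → ℝ := fun t => f (a + t • d) - t * c - K / 2 * t ^ 2 * ‖d‖ ^ 2
  have hφ : ∀ t, HasDerivAt φ (⟪∇ f (a + t • d), d⟫ - c - K * t * ‖d‖ ^ 2) t := by
    intro t
    have hquad : HasDerivAt (fun s : ℝ => K / 2 * s ^ 2 * ‖d‖ ^ 2) (K * t * ‖d‖ ^ 2) t := by
      refine (((hasDerivAt_pow 2 t).const_mul (K / 2 : ℝ)).mul_const (‖d‖ ^ 2)).congr_deriv ?_
      push_cast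
      ring
    exact (((hf _).hasDerivAt_comp_add_smul).sub (hasDerivAt_mul_const c)).sub hquad
  have hanti : AntitoneOn φ (Ici 0) := by
    refine antitoneOn_of_hasDerivWithinAt_nonpos (convex_Ici 0)
      (fun t _ => (hφ t).continuousAt.continuousWithinAt) (fun t _ => (hφ t).hasDerivWithinAt)
      fun t ht => ?_
    rw [interior_Ici] at ht
    have := hK.inner_gradient_add_smul_sub_le a d ht.out.le
    rw [inner_sub_left] at this
    linarith
  have h10 : φ 1 ≤ φ 0 := hanti (mem_Ici.2 le_rfl) (mem_Ici.2 zero_le_one) zero_le_one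
  simp only [φ, one_smul, zero_smul, add_zero, one_mul, one_pow, zero_mul, sub_zero,
    ne_eq, OfNat.ofNat_ne_zero, not_false_eq_true, zero_pow, mul_zero] at h10
  rw [hd, add_sub_cancel] at h10
  linarith

theorem norm_gradient_sq_le_of_nonneg (hf : Differentiable ℝ f) (hK : LipschitzWith K (∇ f))
    (hnonneg : ∀ x, 0 ≤ f x) (y : E) : ‖∇ f y‖ ^ 2 ≤ 2 * K * f y := by
  set g := ∇ f y
  have hstep : ∀ t : ℝ, t * (1 - K * t / 2) * ‖g‖ ^ 2 ≤ f y := by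
    intro t
    have hdesc := le_add_inner_gradient_add_sq_of_lipschitzWith hf hK y (y - t • g)
    rw [sub_sub_cancel_left, inner_neg_right, real_inner_smul_right, real_inner_self_eq_norm_sq,
      norm_neg, norm_smul, mul_pow, Real.norm_eq_abs, sq_abs] at hdesc
    nlinarith [hnonneg (y - t • g)]
  rcases eq_zero_or_pos K with hK0 | hK0
  · subst hK0
    by_contra! hpos
    have := hstep ((f y + 1) / ‖g‖ ^ 2)
    simp only [NNReal.coe_zero, zero_mul, mul_zero, zero_div, sub_zero, mul_one] at this hpos
    rw [div_mul_cancel₀ _ hpos.ne'] at this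
    linarith
  · have hK0' : (0 : ℝ) < K := hK0
    have := hstep (K : ℝ)⁻¹
    rw [mul_inv_cancel₀ hK0'.ne'] at this
    calc ‖g‖ ^ 2 = 2 * K * ((K : ℝ)⁻¹ * (1 - 1 / 2) * ‖g‖ ^ 2) := by field_simp; ring
      _ ≤ 2 * K * f y := by gcongr

end Descent

theorem mul_le_mul_add_div_mul_sq_of_sq_le {g d u L η : ℝ}
    (hu : 0 ≤ u) (hL : 0 ≤ L) (hη : 0 < η) (h : g ^ 2 ≤ 2 * L * u) :
    g * d ≤ η * u + L / (2 * η) * d ^ 2 := by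
  have hprod : η * u * (L / (2 * η) * d ^ 2) = L * u * d ^ 2 / 2 := by field_simp
  apply abs_le_of_sq_le_sq' _ (by positivity) |>.2
  nlinarith [sq_nonneg (η * u - L / (2 * η) * d ^ 2), mul_le_mul_of_nonneg_right h (sq_nonneg d)]

theorem stmt_0_general {n : ℕ} (h : EuclideanSpace ℝ (Fin n) → ℝ) (L : ℝ) (hL : 0 ≤ L)
    (hnonneg : ∀ x, 0 ≤ h x)
    (hdiff : ContDiff ℝ 1 h)
    (hlip : LipschitzWith (Real.toNNReal L) (gradient h)) :
    ∀ (x x' : EuclideanSpace ℝ (Fin n)) (η : ℝ), 0 < η →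
      h x - (1 + η) * h x' ≤ (L / 2) * (1 + 1 / η) * ‖x - x'‖ ^ 2 := by
  intro x x' η hη
  have hf : Differentiable ℝ h := hdiff.differentiable one_ne_zero
  have hdesc := le_add_inner_gradient_add_sq_of_lipschitzWith hf hlip x' x
  have hgrad := norm_gradient_sq_le_of_nonneg hf hlip hnonneg x'
  rw [Real.coe_toNNReal L hL] at hdesc hgrad
  rw [sub_le_iff_le_add']
  calc h x ≤ h x' + ⟪∇ h x', x - x'⟫ + L / 2 * ‖x - x'‖ ^ 2 := hdesc
    _ ≤ h x' + ‖∇ h x'‖ * ‖x - x'‖ + L / 2 * ‖x - x'‖ ^ 2 := by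
        gcongr
        exact real_inner_le_norm _ _
    _ ≤ h x' + (η * h x' + L / (2 * η) * ‖x - x'‖ ^ 2) + L / 2 * ‖x - x'‖ ^ 2 := by
        gcongr
        exact mul_le_mul_add_div_mul_sq_of_sq_le (hnonneg x') hL hη hgrad
    _ = (1 + η) * h x' + L / 2 * (1 + 1 / η) * ‖x - x'‖ ^ 2 := by
        field_simp
        ring

/-- Lemma F.2: for a convex, nonnegative, continuously differentiable function `h`
with `L`-Lipschitz gradient, `h x - (1+η) h x' ≤ (L/2)(1 + 1/η) ‖x - x'‖²`. -/
theorem stmt_0 {n : ℕ} (h : EuclideanSpace ℝ (Fin n) → ℝ) (L : ℝ) (hL : 0 ≤ L)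
    (hconv : ConvexOn ℝ Set.univ h)
    (hnonneg : ∀ x, 0 ≤ h x)
    (hdiff : ContDiff ℝ 1 h)
    (hlip : LipschitzWith (Real.toNNReal L) (gradient h)) :
    ∀ (x x' : EuclideanSpace ℝ (Fin n)) (η : ℝ), 0 < η →
      h x - (1 + η) * h x' ≤ (L / 2) * (1 + 1 / η) * ‖x - x'‖ ^ 2 :=
  stmt_0_general h L hL hnonneg hdiff hlip
end

section
/- Let H = [[G, Jᵀ],[J, 0]] where G is symmetric with μI ⪯ G ⪯ L_H·I (μ > 0), J has full row rank with JJᵀ ⪰ μ_J·I (μ_J > 0), and ‖J‖ ≤ L_H. Then H is invertible and ‖H⁻¹‖ ≤ 1/μ + (1 + 2·L_H/μ + L_H²/μ²)·(L_H/μ_J). -/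
open Matrix

/-- The ℓ²→ℓ² operator (spectral) norm of a real matrix. -/
noncomputable def matOpNorm {α β : Type*} [Fintype α] [Fintype β] [DecidableEq β]
    (M : Matrix α β ℝ) : ℝ :=
  ‖(Matrix.toEuclideanLin M).toContinuousLinearMap‖

/-!
With the Schur complement `S = J G⁻¹ Jᵀ`, the KKT matrix has the explicit inverse with blocks
`G⁻¹ - G⁻¹ Jᵀ S⁻¹ J G⁻¹`, `G⁻¹ Jᵀ S⁻¹`, `S⁻¹ J G⁻¹`, `-S⁻¹`, and the operator norm of a block
matrix is at most the sum of the norms of its blocks. Coercivity `μ |x|² ≤ xᵀ G x` gives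
`‖G⁻¹‖ ≤ 1/μ`. For `S`, put `w = G⁻¹ Jᵀ x`, so that `xᵀ S x = wᵀ G w`; Cauchy–Schwarz for the form
of `G` together with `G ⪯ L_H` gives `|G w|² ≤ L_H wᵀ G w`, hence
`μ_J |x|² ≤ |Jᵀ x|² ≤ L_H xᵀ S x` and `‖S⁻¹‖ ≤ L_H / μ_J`.
-/

open scoped Matrix.Norms.L2Operator

theorem EuclideanSpace.norm_toLp_sum_elim_sq {𝕜 : Type*} [RCLike 𝕜] {ι κ : Type*} [Fintype ι]
    [Fintype κ] (u : ι → 𝕜) (v : κ → 𝕜) :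
    ‖WithLp.toLp 2 (Sum.elim u v)‖ ^ 2 = ‖WithLp.toLp 2 u‖ ^ 2 + ‖WithLp.toLp 2 v‖ ^ 2 := by
  simp [EuclideanSpace.norm_sq_eq, Fintype.sum_sum_type]

theorem EuclideanSpace.norm_toLp_sum_elim_le {𝕜 : Type*} [RCLike 𝕜] {ι κ : Type*} [Fintype ι]
    [Fintype κ] (u : ι → 𝕜) (v : κ → 𝕜) :
    ‖WithLp.toLp 2 (Sum.elim u v)‖ ≤ ‖WithLp.toLp 2 u‖ + ‖WithLp.toLp 2 v‖ := by
  have := EuclideanSpace.norm_toLp_sum_elim_sq u v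
  nlinarith [norm_nonneg (WithLp.toLp 2 (Sum.elim u v)), norm_nonneg (WithLp.toLp 2 u),
    norm_nonneg (WithLp.toLp 2 v)]

theorem EuclideanSpace.real_norm_sq_eq_dotProduct {ι : Type*} [Fintype ι]
    (x : EuclideanSpace ℝ ι) :
    ‖x‖ ^ 2 = x.ofLp ⬝ᵥ x.ofLp := by
  rw [← real_inner_self_eq_norm_sq, EuclideanSpace.inner_eq_star_dotProduct, star_trivial]

namespace Matrix

section SchurComplement

variable {α : Type*} [CommRing α] {m n : Type*} [Fintype m] [Fintype n] [DecidableEq m]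
  [DecidableEq n]

theorem fromBlocks_zero₂₂_mul_eq_one {A : Matrix m m α} (B : Matrix m n α) (C : Matrix n m α)
    (hA : IsUnit A) (hS : IsUnit (C * A⁻¹ * B)) :
    fromBlocks A B C 0 *
      fromBlocks (A⁻¹ - A⁻¹ * B * (C * A⁻¹ * B)⁻¹ * C * A⁻¹) (A⁻¹ * B * (C * A⁻¹ * B)⁻¹)
        ((C * A⁻¹ * B)⁻¹ * C * A⁻¹) (-(C * A⁻¹ * B)⁻¹) = 1 := by
  have hA' := mul_nonsing_inv A ((isUnit_iff_isUnit_det A).1 hA)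
  have hS' := mul_nonsing_inv _ ((isUnit_iff_isUnit_det _).1 hS)
  rw [fromBlocks_multiply, ← fromBlocks_one]
  congr 1
  · simp only [Matrix.mul_sub, ← Matrix.mul_assoc, hA', Matrix.one_mul, sub_add_cancel]
  · simp only [← Matrix.mul_assoc, hA', Matrix.one_mul, Matrix.mul_neg, add_neg_cancel]
  · simp only [Matrix.mul_sub, ← Matrix.mul_assoc, hS', Matrix.one_mul, Matrix.zero_mul, add_zero,
      sub_self]
  · simp only [← Matrix.mul_assoc, hS', Matrix.zero_mul, add_zero]

theorem isUnit_fromBlocks_zero₂₂ {A : Matrix m m α} (B : Matrix m n α) (C : Matrix n m α)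
    (hA : IsUnit A) (hS : IsUnit (C * A⁻¹ * B)) : IsUnit (fromBlocks A B C 0) :=
  (isUnit_iff_isUnit_det _).2 <|
    isUnit_det_of_right_inverse (fromBlocks_zero₂₂_mul_eq_one B C hA hS)

theorem inv_fromBlocks_zero₂₂ {A : Matrix m m α} (B : Matrix m n α) (C : Matrix n m α)
    (hA : IsUnit A) (hS : IsUnit (C * A⁻¹ * B)) :
    (fromBlocks A B C 0)⁻¹ =
      fromBlocks (A⁻¹ - A⁻¹ * B * (C * A⁻¹ * B)⁻¹ * C * A⁻¹) (A⁻¹ * B * (C * A⁻¹ * B)⁻¹)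
        ((C * A⁻¹ * B)⁻¹ * C * A⁻¹) (-(C * A⁻¹ * B)⁻¹) :=
  inv_eq_right_inv (fromBlocks_zero₂₂_mul_eq_one B C hA hS)

end SchurComplement

section L2OpNorm

theorem l2_opNorm_fromBlocks_le {𝕜 : Type*} [RCLike 𝕜] {l m n o : Type*} [Fintype l] [Fintype m]
    [Fintype n] [Fintype o] [DecidableEq l] [DecidableEq m] (A : Matrix n l 𝕜) (B : Matrix n m 𝕜)
    (C : Matrix o l 𝕜) (D : Matrix o m 𝕜) :
    ‖fromBlocks A B C D‖ ≤ ‖A‖ + ‖B‖ + ‖C‖ + ‖D‖ := by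
  rw [l2_opNorm_def]
  refine ContinuousLinearMap.opNorm_le_bound _ (by positivity) fun x => ?_
  set x₁ : EuclideanSpace 𝕜 l := WithLp.toLp 2 (x.ofLp ∘ Sum.inl)
  set x₂ : EuclideanSpace 𝕜 m := WithLp.toLp 2 (x.ofLp ∘ Sum.inr)
  have hx : ‖x₁‖ ^ 2 + ‖x₂‖ ^ 2 = ‖x‖ ^ 2 := by
    rw [← EuclideanSpace.norm_toLp_sum_elim_sq, Sum.elim_comp_inl_inr]
  have hx₁ : ‖x₁‖ ≤ ‖x‖ := by nlinarith [norm_nonneg x₁, norm_nonneg x]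
  have hx₂ : ‖x₂‖ ≤ ‖x‖ := by nlinarith [norm_nonneg x₂, norm_nonneg x]
  change ‖WithLp.toLp 2 (fromBlocks A B C D *ᵥ x.ofLp)‖ ≤ _
  rw [fromBlocks_mulVec]
  calc _ ≤ ‖WithLp.toLp 2 (A *ᵥ x₁.ofLp + B *ᵥ x₂.ofLp)‖
        + ‖WithLp.toLp 2 (C *ᵥ x₁.ofLp + D *ᵥ x₂.ofLp)‖ :=
        EuclideanSpace.norm_toLp_sum_elim_le _ _
    _ ≤ (‖A‖ * ‖x₁‖ + ‖B‖ * ‖x₂‖) + (‖C‖ * ‖x₁‖ + ‖D‖ * ‖x₂‖) := by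
        simp only [WithLp.toLp_add]
        gcongr <;>
          exact (norm_add_le _ _).trans (add_le_add (l2_opNorm_mulVec _ _) (l2_opNorm_mulVec _ _))
    _ ≤ (‖A‖ * ‖x‖ + ‖B‖ * ‖x‖) + (‖C‖ * ‖x‖ + ‖D‖ * ‖x‖) := by gcongr
    _ = (‖A‖ + ‖B‖ + ‖C‖ + ‖D‖) * ‖x‖ := by ring

theorem l2_opNorm_inv_fromBlocks_zero₂₂_le {𝕜 : Type*} [RCLike 𝕜] {m n : Type*} [Fintype m]
    [Fintype n] [DecidableEq m] [DecidableEq n] {A : Matrix m m 𝕜} (B : Matrix m n 𝕜)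
    (C : Matrix n m 𝕜) (hA : IsUnit A) (hS : IsUnit (C * A⁻¹ * B)) :
    ‖(fromBlocks A B C 0)⁻¹‖ ≤
      ‖A⁻¹‖ + ‖A⁻¹‖ * ‖B‖ * ‖(C * A⁻¹ * B)⁻¹‖ * ‖C‖ * ‖A⁻¹‖
        + ‖A⁻¹‖ * ‖B‖ * ‖(C * A⁻¹ * B)⁻¹‖ + ‖(C * A⁻¹ * B)⁻¹‖ * ‖C‖ * ‖A⁻¹‖
        + ‖(C * A⁻¹ * B)⁻¹‖ := by
  rw [inv_fromBlocks_zero₂₂ B C hA hS]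
  refine (l2_opNorm_fromBlocks_le _ _ _ _).trans ?_
  rw [norm_neg]
  grw [norm_sub_le]
  repeat grw [l2_opNorm_mul]

theorem l2_opNorm_transpose {𝕜 : Type*} [RCLike 𝕜] [TrivialStar 𝕜] {m n : Type*} [Fintype m]
    [Fintype n] [DecidableEq m] [DecidableEq n] (A : Matrix m n 𝕜) : ‖Aᵀ‖ = ‖A‖ := by
  rw [← conjTranspose_eq_transpose_of_trivial, l2_opNorm_conjTranspose]

end L2OpNorm

theorem dotProduct_self_nonneg {R k : Type*} [Ring R] [LinearOrder R] [IsStrictOrderedRing R]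
    [Fintype k] (v : k → R) : 0 ≤ v ⬝ᵥ v :=
  Fintype.sum_nonneg fun i => mul_self_nonneg (v i)

variable {k m n : Type*} [Fintype k] [Fintype m] [Fintype n] [DecidableEq k] [DecidableEq m]
  [DecidableEq n]

theorem isUnit_of_coercive {A : Matrix k k ℝ} {a c : ℝ} (hc : 0 < c)
    (h : ∀ x, c * (x ⬝ᵥ x) ≤ a * (x ⬝ᵥ (A *ᵥ x))) : IsUnit A := by
  refine mulVec_injective_iff_isUnit.1 fun x y hxy =>
    sub_eq_zero.1 <| dotProduct_self_eq_zero.1 ?_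
  have hz := h (x - y)
  rw [mulVec_sub, hxy, sub_self, dotProduct_zero, mul_zero] at hz
  exact le_antisymm (nonpos_of_mul_nonpos_right hz hc) (dotProduct_self_nonneg _)

theorem l2_opNorm_inv_le_of_coercive {A : Matrix k k ℝ} {a c : ℝ} (ha : 0 ≤ a)
    (hc : 0 < c) (h : ∀ x, c * (x ⬝ᵥ x) ≤ a * (x ⬝ᵥ (A *ᵥ x))) : ‖A⁻¹‖ ≤ a / c := by
  rw [l2_opNorm_def]
  refine ContinuousLinearMap.opNorm_le_bound _ (by positivity) fun v => ?_
  set y : EuclideanSpace ℝ k := WithLp.toLp 2 (A⁻¹ *ᵥ v.ofLp)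
  change ‖y‖ ≤ a / c * ‖v‖
  have hAy : A *ᵥ y.ofLp = v.ofLp := by
    rw [mulVec_mulVec, mul_nonsing_inv _ ((isUnit_iff_isUnit_det A).1 (isUnit_of_coercive hc h)),
      one_mulVec]
  have key : c * ‖y‖ ^ 2 ≤ a * ‖v‖ * ‖y‖ :=
    calc c * ‖y‖ ^ 2 = c * (y.ofLp ⬝ᵥ y.ofLp) := by
          rw [EuclideanSpace.real_norm_sq_eq_dotProduct]
      _ ≤ a * (y.ofLp ⬝ᵥ v.ofLp) := hAy ▸ h y.ofLp
      _ ≤ a * (‖y‖ * ‖v‖) := by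
          gcongr
          simpa [EuclideanSpace.inner_eq_star_dotProduct, dotProduct_comm] using
            real_inner_le_norm y v
      _ = a * ‖v‖ * ‖y‖ := by ring
  rw [div_mul_eq_mul_div, le_div_iff₀ hc]
  rcases (norm_nonneg y).eq_or_lt with hy | hy
  · rw [← hy, zero_mul]; positivity
  · nlinarith

theorem PosSemidef.mul_dotProduct_self_le {A : Matrix k k ℝ} {c : ℝ}
    (h : (A - c • 1).PosSemidef) (x : k → ℝ) : c * (x ⬝ᵥ x) ≤ x ⬝ᵥ (A *ᵥ x) := by
  simpa only [star_trivial, sub_mulVec, smul_mulVec, one_mulVec, dotProduct_sub,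
    dotProduct_smul, smul_eq_mul, sub_nonneg] using h.dotProduct_mulVec_nonneg x

theorem PosSemidef.dotProduct_mulVec_le_mul_dotProduct_self {A : Matrix k k ℝ} {c : ℝ}
    (h : (c • 1 - A).PosSemidef) (x : k → ℝ) : x ⬝ᵥ (A *ᵥ x) ≤ c * (x ⬝ᵥ x) := by
  simpa only [star_trivial, sub_mulVec, smul_mulVec, one_mulVec, dotProduct_sub,
    dotProduct_smul, smul_eq_mul, sub_nonneg] using h.dotProduct_mulVec_nonneg x

theorem PosSemidef.mulVec_dotProduct_mulVec_le {A : Matrix k k ℝ} {L : ℝ} (hA : A.PosSemidef)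
    (hL : (L • 1 - A).PosSemidef) (w : k → ℝ) :
    (A *ᵥ w) ⬝ᵥ (A *ᵥ w) ≤ L * (w ⬝ᵥ (A *ᵥ w)) := by
  set u := A *ᵥ w
  have hsymm : w ⬝ᵥ (A *ᵥ u) = u ⬝ᵥ u := by
    rw [dotProduct_mulVec, ← mulVec_transpose, ← conjTranspose_eq_transpose_of_trivial,
      hA.isHermitian.eq, dotProduct_comm]
  have hCS : (u ⬝ᵥ u) * (u ⬝ᵥ u) ≤ (u ⬝ᵥ (A *ᵥ u)) * (w ⬝ᵥ u) := by
    have := (toBilin' A).apply_mul_apply_le_of_forall_zero_le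
      (fun x => by simpa [toBilin'_apply'] using hA.dotProduct_mulVec_nonneg x) u w
    rwa [toBilin'_apply', toBilin'_apply', toBilin'_apply', toBilin'_apply', hsymm] at this
  have hAu : u ⬝ᵥ (A *ᵥ u) ≤ L * (u ⬝ᵥ u) := hL.dotProduct_mulVec_le_mul_dotProduct_self u
  rcases (dotProduct_self_nonneg u).eq_or_lt with hu | hu
  · simp [dotProduct_self_eq_zero.1 hu.symm]
  · have hwu : 0 ≤ w ⬝ᵥ u := by simpa using hA.dotProduct_mulVec_nonneg w
    nlinarith [mul_le_mul_of_nonneg_right hAu hwu]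

theorem mul_dotProduct_self_le_schur {G : Matrix n n ℝ} {J : Matrix m n ℝ} {L c : ℝ}
    (hG : G.PosSemidef) (hGL : (L • 1 - G).PosSemidef) (hGu : IsUnit G)
    (hJ : (J * Jᵀ - c • 1).PosSemidef) (x : m → ℝ) :
    c * (x ⬝ᵥ x) ≤ L * (x ⬝ᵥ ((J * G⁻¹ * Jᵀ) *ᵥ x)) := by
  set w := G⁻¹ *ᵥ (Jᵀ *ᵥ x)
  have hGw : G *ᵥ w = Jᵀ *ᵥ x := by
    rw [mulVec_mulVec, mul_nonsing_inv _ ((isUnit_iff_isUnit_det G).1 hGu), one_mulVec]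
  calc c * (x ⬝ᵥ x) ≤ x ⬝ᵥ ((J * Jᵀ) *ᵥ x) := hJ.mul_dotProduct_self_le x
    _ = (G *ᵥ w) ⬝ᵥ (G *ᵥ w) := by
      rw [hGw, ← mulVec_mulVec, dotProduct_mulVec, ← mulVec_transpose]
    _ ≤ L * (w ⬝ᵥ (G *ᵥ w)) := hG.mulVec_dotProduct_mulVec_le hGL w
    _ = L * (x ⬝ᵥ ((J * G⁻¹ * Jᵀ) *ᵥ x)) := by
      rw [hGw, ← mulVec_mulVec, ← mulVec_mulVec, dotProduct_mulVec x J, ← mulVec_transpose,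
        dotProduct_comm]

end Matrix

theorem stmt_4_general {n m : ℕ} (G : Matrix (Fin n) (Fin n) ℝ) (J : Matrix (Fin m) (Fin n) ℝ)
    (μ LH μJ : ℝ) (hμ : 0 < μ) (hμJ : 0 < μJ)
    (hGlo : (G - μ • (1 : Matrix (Fin n) (Fin n) ℝ)).PosSemidef)
    (hGhi : (LH • (1 : Matrix (Fin n) (Fin n) ℝ) - G).PosSemidef)
    (hJJ : (J * Jᵀ - μJ • (1 : Matrix (Fin m) (Fin m) ℝ)).PosSemidef)
    (hJnorm : matOpNorm J ≤ LH) :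
    IsUnit (Matrix.fromBlocks G Jᵀ J 0) ∧
      matOpNorm (Matrix.fromBlocks G Jᵀ J 0)⁻¹ ≤
        1 / μ + (1 + 2 * LH / μ + LH ^ 2 / μ ^ 2) * (LH / μJ) := by
  change ‖J‖ ≤ LH at hJnorm
  have hGpsd : G.PosSemidef := by simpa using hGlo.add (PosSemidef.one.smul hμ.le)
  have hGcoer (x : Fin n → ℝ) : μ * (x ⬝ᵥ x) ≤ 1 * (x ⬝ᵥ (G *ᵥ x)) := by
    simpa using hGlo.mul_dotProduct_self_le x
  have hG : IsUnit G := isUnit_of_coercive hμ hGcoer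
  have hScoer := mul_dotProduct_self_le_schur hGpsd hGhi hG hJJ
  have hS : IsUnit (J * G⁻¹ * Jᵀ) := isUnit_of_coercive hμJ hScoer
  have hLH : 0 ≤ LH := (norm_nonneg J).trans hJnorm
  have hGinv : ‖G⁻¹‖ ≤ 1 / μ := l2_opNorm_inv_le_of_coercive zero_le_one hμ hGcoer
  have hSinv : ‖(J * G⁻¹ * Jᵀ)⁻¹‖ ≤ LH / μJ := l2_opNorm_inv_le_of_coercive hLH hμJ hScoer
  have hJt : ‖Jᵀ‖ ≤ LH := (l2_opNorm_transpose J).trans_le hJnorm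
  refine ⟨isUnit_fromBlocks_zero₂₂ _ _ hG hS, ?_⟩
  calc matOpNorm (fromBlocks G Jᵀ J 0)⁻¹
      ≤ ‖G⁻¹‖ + ‖G⁻¹‖ * ‖Jᵀ‖ * ‖(J * G⁻¹ * Jᵀ)⁻¹‖ * ‖J‖ * ‖G⁻¹‖
        + ‖G⁻¹‖ * ‖Jᵀ‖ * ‖(J * G⁻¹ * Jᵀ)⁻¹‖ + ‖(J * G⁻¹ * Jᵀ)⁻¹‖ * ‖J‖ * ‖G⁻¹‖
        + ‖(J * G⁻¹ * Jᵀ)⁻¹‖ := l2_opNorm_inv_fromBlocks_zero₂₂_le _ _ hG hS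
    _ ≤ 1 / μ + 1 / μ * LH * (LH / μJ) * LH * (1 / μ) + 1 / μ * LH * (LH / μJ)
        + LH / μJ * LH * (1 / μ) + LH / μJ := by gcongr
    _ = 1 / μ + (1 + 2 * LH / μ + LH ^ 2 / μ ^ 2) * (LH / μJ) := by field_simp; ring

/-- KKT matrix bound: for `H = [[G, Jᵀ],[J, 0]]` with `μ I ⪯ G ⪯ L_H I`, `J` of full row
rank with `J Jᵀ ⪰ μ_J I` and `‖J‖ ≤ L_H`, the matrix `H` is invertible and
`‖H⁻¹‖ ≤ 1/μ + (1 + 2 L_H/μ + L_H²/μ²)(L_H/μ_J)`. -/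
theorem stmt_4 {n m : ℕ} (G : Matrix (Fin n) (Fin n) ℝ) (J : Matrix (Fin m) (Fin n) ℝ)
    (μ LH μJ : ℝ) (hμ : 0 < μ) (hμJ : 0 < μJ)
    (hGsymm : G.IsSymm)
    (hGlo : (G - μ • (1 : Matrix (Fin n) (Fin n) ℝ)).PosSemidef)
    (hGhi : (LH • (1 : Matrix (Fin n) (Fin n) ℝ) - G).PosSemidef)
    (hJrank : J.rank = m)
    (hJJ : (J * Jᵀ - μJ • (1 : Matrix (Fin m) (Fin m) ℝ)).PosSemidef)
    (hJnorm : matOpNorm J ≤ LH) :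
    IsUnit (Matrix.fromBlocks G Jᵀ J 0) ∧
      matOpNorm (Matrix.fromBlocks G Jᵀ J 0)⁻¹ ≤
        1 / μ + (1 + 2 * LH / μ + LH ^ 2 / μ ^ 2) * (LH / μJ) :=
  stmt_4_general G J μ LH μJ hμ hμJ hGlo hGhi hJJ hJnorm
end

section
/- Let c : ℝ^m → ℝ be μ-strongly convex and L-smooth, and let B_z ∈ ℝ^{m×p} have orthonormal columns. Fix v_y, v_y' ∈ ℝ^m and let ω, ω' be the minimizers of ω ↦ c(v_y + B_z ω) and ω ↦ c(v_y' + B_z ω), respectively. Then ‖ω - ω'‖ ≤ (L/μ)·‖v_y - v_y'‖. -/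
/-!
Composing `c` with the affine isometry `w ↦ v + B w` keeps it `μ`-strongly convex, so each
objective grows quadratically away from its minimizer: `μ/2 ‖ω - ω'‖²` is bounded both by
`c(v_y + Bω') - c(v_y + Bω)` and by `c(v_y' + Bω) - c(v_y' + Bω')`. The sum of these two
differences is a mixed second difference of `c`, which the mean value theorem applied to
`x ↦ c(x + Bω') - c(x + Bω)` bounds by `L ‖Bω' - Bω‖ ‖v_y - v_y'‖ = L ‖ω - ω'‖ ‖v_y - v_y'‖`.
Hence `μ ‖ω - ω'‖ ≤ L ‖v_y - v_y'‖`.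
-/

open Matrix

/-- View a plain vector as an element of Euclidean space (Euclidean norm). -/
def evec {k : ℕ} (v : Fin k → ℝ) : EuclideanSpace ℝ (Fin k) := WithLp.toLp 2 v

open Set Filter Topology NNReal

section StrongConvexity

variable {E F : Type*} [NormedAddCommGroup E] [NormedSpace ℝ E]
  [NormedAddCommGroup F] [NormedSpace ℝ F] {μ : ℝ} {f : F → ℝ}

theorem StrongConvexOn.comp_add_linearIsometry (hf : StrongConvexOn univ μ f)
    (A : E →ₗᵢ[ℝ] F) (v : F) : StrongConvexOn univ μ (fun w => f (v + A w)) := by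
  refine ⟨convex_univ, fun x _ y _ a b ha hb hab => ?_⟩
  have hcomb : v + A (a • x + b • y) = a • (v + A x) + b • (v + A y) := by
    rw [map_add, map_smul, map_smul, smul_add, smul_add, add_add_add_comm, ← add_smul, hab,
      one_smul]
  have hdist : ‖(v + A x) - (v + A y)‖ = ‖x - y‖ := by
    rw [add_sub_add_left_eq_sub, ← map_sub, A.norm_map]
  simpa only [hcomb, hdist] using hf.2 (mem_univ (v + A x)) (mem_univ (v + A y)) ha hb hab

theorem StrongConvexOn.mul_sq_norm_sub_le_of_isMinOn (hf : StrongConvexOn univ μ f) {z : F}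
    (hz : IsMinOn f univ z) (w : F) : μ / 2 * ‖w - z‖ ^ 2 ≤ f w - f z := by
  set q := μ / 2 * ‖w - z‖ ^ 2
  -- Moving from `z` a fraction `t` of the way towards `w` cannot decrease `f`.
  have hstep : ∀ t ∈ Ioo (0 : ℝ) 1, (1 - t) * q ≤ f w - f z := by
    rintro t ⟨ht0, ht1⟩
    have hconv := hf.2 (mem_univ z) (mem_univ w) (sub_nonneg.2 ht1.le) ht0.le
      (sub_add_cancel 1 t)
    have hmin := isMinOn_iff.1 hz ((1 - t) • z + t • w) (mem_univ _)
    rw [norm_sub_rev] at hconv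
    simp only [smul_eq_mul] at hconv
    have : t * ((1 - t) * q) ≤ t * (f w - f z) := by linear_combination hmin + hconv
    exact le_of_mul_le_mul_left this ht0
  have hlim : Tendsto (fun t : ℝ => (1 - t) * q) (𝓝[>] 0) (𝓝 q) := by
    refine tendsto_nhdsWithin_of_tendsto_nhds ?_
    exact (show Continuous fun t : ℝ => (1 - t) * q by fun_prop).tendsto' 0 q (by ring)
  exact le_of_tendsto hlim (eventually_of_mem (Ioo_mem_nhdsGT zero_lt_one) hstep)

end StrongConvexity

section GradientLipschitz

variable {F : Type*} [NormedAddCommGroup F] [InnerProductSpace ℝ F] [CompleteSpace F]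
  {f : F → ℝ} {K : ℝ≥0}

theorem abs_sub_sub_sub_le_of_lipschitzWith_gradient (hf : Differentiable ℝ f)
    (hK : LipschitzWith K (gradient f)) (x y u u' : F) :
    |(f (x + u') - f (x + u)) - (f (y + u') - f (y + u))| ≤ K * ‖u' - u‖ * ‖x - y‖ := by
  set g : F → ℝ := fun w => f (w + u') - f (w + u)
  have hg : Differentiable ℝ g := by fun_prop
  have hfderiv : ∀ w, fderiv ℝ g w = fderiv ℝ f (w + u') - fderiv ℝ f (w + u) := by
    intro w
    rw [fderiv_fun_sub (by fun_prop) (by fun_prop), fderiv_comp_add_right, fderiv_comp_add_right]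
  have hbound : ∀ w, ‖fderiv ℝ g w‖₊ ≤ K * ‖u' - u‖₊ := by
    intro w
    have hgrad := hK.dist_le_mul (w + u') (w + u)
    rw [dist_eq_norm, dist_eq_norm, add_sub_add_left_eq_sub] at hgrad
    rw [hfderiv, ← (InnerProductSpace.toDual ℝ F).symm.nnnorm_map, map_sub,
      ← NNReal.coe_le_coe]
    exact hgrad
  simpa [g, ← Real.norm_eq_abs, dist_eq_norm, mul_assoc] using
    (lipschitzWith_of_nnnorm_fderiv_le hg hbound).dist_le_mul x y

theorem StrongConvexOn.le_of_lipschitzWith_gradient {μ : ℝ} (hf : StrongConvexOn univ μ f)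
    (hd : Differentiable ℝ f) (hK : LipschitzWith K (gradient f)) {x y : F} (hxy : x ≠ y) :
    μ ≤ K := by
  set δ : F := (2 : ℝ)⁻¹ • (y - x)
  have hmid : (2 : ℝ)⁻¹ • x + (2 : ℝ)⁻¹ • y = x + δ := by module
  have hend : x + δ + δ = y := by module
  have hxy_norm : ‖x - y‖ = 2 * ‖δ‖ := by
    rw [norm_smul, norm_sub_rev, Real.norm_of_nonneg (by norm_num)]; ring
  have hδ : 0 < ‖δ‖ := by
    have : 0 < ‖x - y‖ := norm_pos_iff.2 (sub_ne_zero.2 hxy)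
    linarith
  -- the second difference `f x - 2 f (x + δ) + f y` is at least `μ ‖δ‖²` and at most `K ‖δ‖²`
  have hconv := hf.2 (mem_univ x) (mem_univ y) (by norm_num : (0 : ℝ) ≤ 2⁻¹)
    (by norm_num : (0 : ℝ) ≤ 2⁻¹) (by norm_num)
  rw [hmid, hxy_norm, smul_eq_mul, smul_eq_mul] at hconv
  beta_reduce at hconv
  have hsmooth := abs_sub_sub_sub_le_of_lipschitzWith_gradient hd hK (x + δ) x 0 δ
  rw [hend, add_zero, add_zero, sub_zero, add_sub_cancel_left] at hsmooth
  have hquad : μ * ‖δ‖ ^ 2 ≤ K * ‖δ‖ ^ 2 := by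
    linarith [(abs_le.1 hsmooth).2]
  exact le_of_mul_le_mul_right hquad (by positivity)

end GradientLipschitz

theorem StrongConvexOn.mul_norm_sub_le_of_isMinOn_add_linearIsometry {E F : Type*}
    [NormedAddCommGroup E] [NormedSpace ℝ E]
    [NormedAddCommGroup F] [InnerProductSpace ℝ F] [CompleteSpace F] {f : F → ℝ} {μ : ℝ}
    {K : ℝ≥0} (hf : StrongConvexOn univ μ f) (hd : Differentiable ℝ f)
    (hK : LipschitzWith K (gradient f)) (A : E →ₗᵢ[ℝ] F) {v v' : F} {z z' : E}
    (hz : IsMinOn (fun w => f (v + A w)) univ z) (hz' : IsMinOn (fun w => f (v' + A w)) univ z') :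
    μ * ‖z - z'‖ ≤ K * ‖v - v'‖ := by
  have hgrowth := (hf.comp_add_linearIsometry A v).mul_sq_norm_sub_le_of_isMinOn hz z'
  have hgrowth' := (hf.comp_add_linearIsometry A v').mul_sq_norm_sub_le_of_isMinOn hz' z
  have hsmooth := abs_sub_sub_sub_le_of_lipschitzWith_gradient hd hK v v' (A z) (A z')
  rw [← map_sub, A.norm_map, norm_sub_rev] at hsmooth
  rw [norm_sub_rev] at hgrowth
  have hquad : μ * ‖z - z'‖ ^ 2 ≤ K * ‖v - v'‖ * ‖z - z'‖ := by
    linarith [(abs_le.1 hsmooth).2]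
  rcases (norm_nonneg (z - z')).eq_or_lt with hzero | hpos
  · rw [← hzero, mul_zero]
    positivity
  · exact le_of_mul_le_mul_right (by linarith) hpos

noncomputable def Matrix.toEuclideanLinearIsometry {𝕜 m n : Type*} [RCLike 𝕜] [Fintype m]
    [Fintype n] [DecidableEq n] (B : Matrix m n 𝕜) (hB : Bᴴ * B = 1) :
    EuclideanSpace 𝕜 n →ₗᵢ[𝕜] EuclideanSpace 𝕜 m :=
  (toLpLin 2 2 B).isometryOfInner fun x y => by
    simp only [EuclideanSpace.inner_eq_star_dotProduct, ofLp_toLpLin, toLin'_apply]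
    rw [star_mulVec, dotProduct_comm, dotProduct_mulVec, vecMul_vecMul, hB, vecMul_one,
      dotProduct_comm]

/-- For `c` μ-strongly convex and `L`-smooth and `B_z` with orthonormal columns, the
minimizers `ω, ω'` of `ω ↦ c(v_y + B_z ω)` and `ω ↦ c(v_y' + B_z ω)` satisfy
`‖ω - ω'‖ ≤ (L/μ) ‖v_y - v_y'‖`. -/
theorem stmt_9 {m p : ℕ} (c : EuclideanSpace ℝ (Fin m) → ℝ) (μ L : ℝ) (hμ : 0 < μ)
    (hsc : StrongConvexOn Set.univ μ c)
    (hdiff : ContDiff ℝ 2 c)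
    (hsmooth : LipschitzWith (Real.toNNReal L) (gradient c))
    (Bz : Matrix (Fin m) (Fin p) ℝ) (hBz : Bzᵀ * Bz = 1)
    (vy vy' : Fin m → ℝ) (ω ω' : Fin p → ℝ)
    (hω : IsMinOn (fun w : Fin p → ℝ => c (evec (vy + Bz.mulVec w))) Set.univ ω)
    (hω' : IsMinOn (fun w : Fin p → ℝ => c (evec (vy' + Bz.mulVec w))) Set.univ ω') :
    ‖evec (ω - ω')‖ ≤ (L / μ) * ‖evec (vy - vy')‖ := by
  have hd : Differentiable ℝ c := hdiff.differentiable (by norm_num)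
  set A := Bz.toEuclideanLinearIsometry (by rwa [conjTranspose_eq_transpose_of_trivial])
  have hmin : ∀ {v : Fin m → ℝ} {z : Fin p → ℝ},
      IsMinOn (fun w : Fin p → ℝ => c (evec (v + Bz *ᵥ w))) univ z →
        IsMinOn (fun w => c (evec v + A w)) univ (evec z) :=
    fun h => isMinOn_iff.2 fun w _ => isMinOn_iff.1 h w.ofLp (mem_univ _)
  have hkey :=
    hsc.mul_norm_sub_le_of_isMinOn_add_linearIsometry hd hsmooth A (hmin hω) (hmin hω')
  -- `L.toNNReal` is `0` when `L < 0`, which `μ ≤ L.toNNReal` excludes unless `vy = vy'`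
  have hL : (L.toNNReal : ℝ) * ‖evec vy - evec vy'‖ ≤ L * ‖evec vy - evec vy'‖ := by
    rcases eq_or_ne (evec vy) (evec vy') with heq | hne
    · simp [heq]
    · have hμL := hsc.le_of_lipschitzWith_gradient hd hsmooth hne
      rw [Real.coe_toNNReal', le_max_iff] at hμL
      rw [Real.coe_toNNReal _ (by rcases hμL with h | h <;> linarith)]
  change ‖evec ω - evec ω'‖ ≤ L / μ * ‖evec vy - evec vy'‖
  rw [div_mul_eq_mul_div, le_div_iff₀ hμ]
  linarith
end

section
/- Let δ ∈ (0,1), C ≥ 1, and let ξ = 1 - √δ ∈ (0,1). Suppose a nonnegative sequence (a_t)_{t≥0} satisfies a_0 ≤ ‖x₀‖ and, for all t with the hypothesis a_{t-m} ≤ (C/ξ)(1-ξ)^{max(0, t-m-k)}‖x₀‖ + W/ξ for all 0 ≤ m ≤ k-1, the recursion a_{t+1} ≤ C·Σ_{m=0}^{k-1} Λ_m · a_{t-m} + W where the coefficients satisfy C·Σ_{m=0}^{k-1} Λ_m·(1-ξ)^{-m-1} ≤ 1 - ξ. Then a_{t+1} ≤ (C/ξ)(1-ξ)^{max(0, t+1-k)}‖x₀‖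 + W/ξ. -/
/-! The ISS bound at time `t - m` is `A (1-ξ)^{-m-1} + W/ξ` with `A = (C/ξ)(1-ξ)^{t+1-k} ‖x₀‖`
independent of `m`. Feeding these into the recursion and using the coefficient condition
`C Σ Λ_m (1-ξ)^{-m-1} ≤ 1-ξ` (which also bounds `C Σ Λ_m`, the weights being `≥ 1`) gives
`a_{t+1} ≤ (1-ξ)(A + W/ξ) + W = (1-ξ) A + W/ξ ≤ A + W/ξ`. -/

open Finset

theorem mul_sum_le_of_le_weighted {ι : Type*} {s : Finset ι} {Λ b w : ι → ℝ} {A B C q : ℝ}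
    (hA : 0 ≤ A) (hB : 0 ≤ B) (hC : 0 ≤ C)
    (hΛ : ∀ m ∈ s, 0 ≤ Λ m) (hw : ∀ m ∈ s, 1 ≤ w m)
    (hb : ∀ m ∈ s, b m ≤ A * w m + B)
    (hcoef : C * ∑ m ∈ s, Λ m * w m ≤ q) :
    C * ∑ m ∈ s, Λ m * b m ≤ q * (A + B) := by
  have hsum_le : C * ∑ m ∈ s, Λ m ≤ q :=
    le_trans (mul_le_mul_of_nonneg_left (sum_le_sum fun m hm =>
      le_mul_of_one_le_right (hΛ m hm) (hw m hm)) hC) hcoef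
  calc C * ∑ m ∈ s, Λ m * b m
      ≤ C * ∑ m ∈ s, Λ m * (A * w m + B) :=
        mul_le_mul_of_nonneg_left (sum_le_sum fun m hm =>
          mul_le_mul_of_nonneg_left (hb m hm) (hΛ m hm)) hC
    _ = A * (C * ∑ m ∈ s, Λ m * w m) + B * (C * ∑ m ∈ s, Λ m) := by
        simp only [mul_add, sum_add_distrib, mul_sum]
        congr 1 <;> refine sum_congr rfl fun m _ => by ring
    _ ≤ A * q + B * q := by gcongr
    _ = q * (A + B) := by ring

theorem Real.rpow_neg_natCast_sub_one {q : ℝ} (hq : 0 ≤ q) (m : ℕ) :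
    q ^ (-(m : ℝ) - 1) = (q ^ (m + 1))⁻¹ := by
  rw [show -(m : ℝ) - 1 = -((m + 1 : ℕ) : ℝ) by push_cast; ring, Real.rpow_neg hq,
    Real.rpow_natCast]

theorem stmt_10_general (δ C ξ W X : ℝ) (a Λ : ℕ → ℝ) (k t : ℕ)
    (hδ0 : 0 < δ) (hδ1 : δ < 1) (hC : 1 ≤ C)
    (hξ : ξ = 1 - Real.sqrt δ)
    (ht : 2 * k - 1 ≤ t)
    (hX : 0 ≤ X) (hW : 0 ≤ W)
    (hΛ : ∀ m, 0 ≤ Λ m)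
    (hIH : ∀ m < k, a (t - m) ≤ (C / ξ) * (1 - ξ) ^ (t - m - k) * X + W / ξ)
    (hrec : a (t + 1) ≤ C * (∑ m ∈ Finset.range k, Λ m * a (t - m)) + W)
    (hcoef : C * (∑ m ∈ Finset.range k, Λ m * (1 - ξ) ^ (-(m : ℝ) - 1)) ≤ 1 - ξ) :
    a (t + 1) ≤ (C / ξ) * (1 - ξ) ^ (t + 1 - k) * X + W / ξ := by
  set q := 1 - ξ with hq
  have hq0 : 0 < q := by rw [hq, hξ, sub_sub_cancel]; exact Real.sqrt_pos.mpr hδ0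
  have hq1 : q < 1 := by rw [hq, hξ, sub_sub_cancel]; simpa using Real.sqrt_lt_sqrt hδ0.le hδ1
  have hξ0 : 0 < ξ := by linarith
  set A := (C / ξ) * q ^ (t + 1 - k) * X
  have hA : 0 ≤ A := by positivity
  have hIH_weighted : ∀ m ∈ range k, a (t - m) ≤ A * (q ^ (m + 1))⁻¹ + W / ξ := by
    intro m hm
    -- no truncation here: `m < k` and `2k - 1 ≤ t` give `m + k ≤ t`
    have hexp : t - m - k = (t + 1 - k) - (m + 1) := by grind
    have := hIH m (mem_range.mp hm)
    rwa [hexp, pow_sub₀ q hq0.ne' (by grind), show (C / ξ) * (q ^ (t + 1 - k) *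
      (q ^ (m + 1))⁻¹) * X = A * (q ^ (m + 1))⁻¹ by ring] at this
  simp only [Real.rpow_neg_natCast_sub_one hq0.le] at hcoef
  have hsum := mul_sum_le_of_le_weighted hA (div_nonneg hW hξ0.le) (by linarith)
    (fun m _ => hΛ m) (fun m _ => (one_le_inv₀ (pow_pos hq0 _)).mpr (pow_le_one₀ hq0.le hq1.le))
    hIH_weighted hcoef
  calc a (t + 1) ≤ q * (A + W / ξ) + W := by linarith
    _ = q * A + W / ξ := by rw [hq]; field_simp; ring
    _ ≤ A + W / ξ := by gcongr; exact mul_le_of_le_one_left hA hq1.le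

/-- Induction step of the ISS argument: if `a_{t-m}` satisfies the ISS bound for
`0 ≤ m ≤ k-1`, the recursion `a_{t+1} ≤ C Σ_m Λ_m a_{t-m} + W` holds, and the
coefficients satisfy `C Σ_m Λ_m (1-ξ)^{-m-1} ≤ 1-ξ`, then `a_{t+1}` satisfies the ISS
bound as well. -/
theorem stmt_10 (δ C ξ W X : ℝ) (a Λ : ℕ → ℝ) (k t : ℕ)
    (hδ0 : 0 < δ) (hδ1 : δ < 1) (hC : 1 ≤ C)
    (hξ : ξ = 1 - Real.sqrt δ)
    (hk : 1 ≤ k) (ht : 2 * k - 1 ≤ t)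
    (hX : 0 ≤ X) (hW : 0 ≤ W)
    (ha : ∀ s, 0 ≤ a s) (hΛ : ∀ m, 0 ≤ Λ m)
    (ha0 : a 0 ≤ X)
    (hIH : ∀ m < k, a (t - m) ≤ (C / ξ) * (1 - ξ) ^ (t - m - k) * X + W / ξ)
    (hrec : a (t + 1) ≤ C * (∑ m ∈ Finset.range k, Λ m * a (t - m)) + W)
    (hcoef : C * (∑ m ∈ Finset.range k, Λ m * (1 - ξ) ^ (-(m : ℝ) - 1)) ≤ 1 - ξ) :
    a (t + 1) ≤ (C / ξ) * (1 - ξ) ^ (t + 1 - k) * X + W / ξ :=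
  stmt_10_general δ C ξ W X a Λ k t hδ0 hδ1 hC hξ ht hX hW hΛ hIH hrec hcoef
end

section
/- Combining the previous two ingredients: let c : ℝ^m → ℝ be μ-strongly convex and L-smooth, B ∈ ℝ^{n×m} with ‖B†‖ ≤ L, ‖A‖ ≤ L, and suppose the one-step problems min{ c(v) : x_{t+1} = A x_t + B v + w_t } and min{ c(v) : x_{t+1}' = A x_t' + B v + w_t } are feasible with minimizers v and v'. Then ‖v - v'‖² ≤ (4L⁶/μ²)·(‖x_t - x_t'‖² + ‖x_{t+1} - x_{t+1}'‖²). -/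
open Matrix

/-- `Bdag` is the Moore–Penrose pseudo-inverse of `B`. -/
def IsMoorePenrose {n m : ℕ} (B : Matrix (Fin n) (Fin m) ℝ)
    (Bdag : Matrix (Fin m) (Fin n) ℝ) : Prop :=
  B * Bdag * B = B ∧ Bdag * B * Bdag = Bdag ∧
    (B * Bdag)ᵀ = B * Bdag ∧ (Bdag * B)ᵀ = Bdag * B

/-! Write `v - v' = d + z` with `d = B†B(v - v')`; the Penrose identity `BB†B = B` gives `Bz = 0`,
so `z` is a feasible direction of both problems and first-order optimality makes both gradients
orthogonal to `z`. Strong monotonicity and the Lipschitz bound of `∇c` then give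
`μ‖v - v'‖² ≤ ⟪∇c v - ∇c v', d⟫ ≤ L‖v - v'‖‖d‖`, and
`‖d‖ ≤ ‖B†‖‖(x_{t+1} - x_{t+1}') - A(x_t - x_t')‖ ≤ L(‖x_{t+1} - x_{t+1}'‖ + L‖x_t - x_t'‖)`. -/

open Set
open scoped RealInnerProductSpace

section
variable {E : Type*} [NormedAddCommGroup E] [NormedSpace ℝ E] {f : E → ℝ}
  {f' g' : E →L[ℝ] ℝ} {x y : E}

theorem ConvexOn.apply_sub_le_apply_sub_of_hasFDerivAt (hf : ConvexOn ℝ univ f)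
    (hx : HasFDerivAt f f' x) (hy : HasFDerivAt f g' y) : g' (x - y) ≤ f' (x - y) := by
  set ℓ : ℝ →ᵃ[ℝ] E := AffineMap.lineMap y x
  have hline : ConvexOn ℝ univ (f ∘ ℓ) := by simpa using hf.comp_affineMap ℓ
  have hderiv : ∀ {t : ℝ} {h : E →L[ℝ] ℝ}, HasFDerivAt f h (ℓ t) →
      HasDerivAt (f ∘ ℓ) (h (x - y)) t := fun hh =>
    hh.comp_hasDerivAt _ AffineMap.hasDerivAt_lineMap
  have h0 := hderiv (t := 0) (by simpa [ℓ] using hy)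
  have h1 := hderiv (t := 1) (by simpa [ℓ] using hx)
  exact (hline.le_slope_of_hasDerivAt (mem_univ _) (mem_univ _) zero_lt_one h0).trans
    (hline.slope_le_of_hasDerivAt (mem_univ _) (mem_univ _) zero_lt_one h1)
end

section
variable {E : Type*} [NormedAddCommGroup E] [InnerProductSpace ℝ E] [CompleteSpace E]
  {c : E → ℝ} {μ : ℝ} {x y gx gy : E}

theorem StrongConvexOn.mul_norm_sub_sq_le_inner (hc : StrongConvexOn univ μ c)
    (hx : HasGradientAt c gx x) (hy : HasGradientAt c gy y) :
    μ * ‖x - y‖ ^ 2 ≤ ⟪gx - gy, x - y⟫ := by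
  have hd : ∀ {z g : E}, HasGradientAt c g z → HasFDerivAt (fun z => c z - μ / 2 * ‖z‖ ^ 2)
      (InnerProductSpace.toDual ℝ E g - (μ / 2) • (2 • innerSL ℝ z)) z := fun h =>
    (hasGradientAt_iff_hasFDerivAt.mp h).sub
      ((hasStrictFDerivAt_norm_sq _).hasFDerivAt.const_mul _)
  have key :=
    (strongConvexOn_iff_convex.mp hc).apply_sub_le_apply_sub_of_hasFDerivAt (hd hx) (hd hy)
  have hsq : ⟪x, x - y⟫ - ⟪y, x - y⟫ = ‖x - y‖ ^ 2 := by
    rw [← inner_sub_left, real_inner_self_eq_norm_sq]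
  simp only [_root_.sub_apply, InnerProductSpace.toDual_apply_apply,
    _root_.smul_apply, innerSL_apply_apply, smul_eq_mul, nsmul_eq_mul, Nat.cast_ofNat] at key
  rw [inner_sub_left, ← hsq]
  linarith

theorem inner_gradient_eq_zero_of_forall_le_add_smul {u z g : E} (hg : HasGradientAt c g u)
    (hmin : ∀ t : ℝ, c u ≤ c (u + t • z)) : ⟪g, z⟫ = 0 := by
  have hline : HasDerivAt (fun t : ℝ => u + t • z) z 0 := by
    simpa using ((hasDerivAt_id (0 : ℝ)).smul_const z).const_add u
  have hderiv : HasDerivAt (fun t : ℝ => c (u + t • z)) ⟪g, z⟫ 0 :=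
    (hasGradientAt_iff_hasFDerivAt.mp hg).comp_hasDerivAt_of_eq 0 hline (by simp)
  exact IsLocalMin.hasDerivAt_eq_zero (Filter.Eventually.of_forall fun t => by simpa using hmin t)
    hderiv

theorem StrongConvexOn.mul_norm_sub_le_of_forall_le_add_smul {K : NNReal}
    (hc : StrongConvexOn univ μ c) (hdiff : Differentiable ℝ c)
    (hlip : LipschitzWith K (gradient c)) {u u' d z : E} (hsplit : u - u' = d + z)
    (hu : ∀ t : ℝ, c u ≤ c (u + t • z)) (hu' : ∀ t : ℝ, c u' ≤ c (u' + t • z)) :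
    μ * ‖u - u'‖ ≤ K * ‖d‖ := by
  set G := gradient c u - gradient c u'
  have horth : ⟪G, z⟫ = 0 := by
    rw [inner_sub_left, inner_gradient_eq_zero_of_forall_le_add_smul (hdiff u).hasGradientAt hu,
      inner_gradient_eq_zero_of_forall_le_add_smul (hdiff u').hasGradientAt hu', sub_zero]
  have hG : ‖G‖ ≤ K * ‖u - u'‖ := by
    simpa only [dist_eq_norm] using hlip.dist_le_mul u u'
  have hquad : μ * ‖u - u'‖ ^ 2 ≤ (K * ‖d‖) * ‖u - u'‖ :=
    calc μ * ‖u - u'‖ ^ 2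
        ≤ ⟪G, u - u'⟫ :=
          hc.mul_norm_sub_sq_le_inner (hdiff u).hasGradientAt (hdiff u').hasGradientAt
      _ = ⟪G, d⟫ := by rw [hsplit, inner_add_right, horth, add_zero]
      _ ≤ ‖G‖ * ‖d‖ := real_inner_le_norm _ _
      _ ≤ (K * ‖u - u'‖) * ‖d‖ := by gcongr
      _ = (K * ‖d‖) * ‖u - u'‖ := by ring
  rcases (norm_nonneg (u - u')).eq_or_lt with h0 | hpos
  · rw [← h0, mul_zero]
    positivity
  · exact le_of_mul_le_mul_right (by linarith) hpos
end

theorem Matrix.mulVec_sub_mulVec_mulVec_eq_zero {R ι κ : Type*} [CommRing R] [Fintype ι]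
    [Fintype κ] {B : Matrix ι κ R} {Bdag : Matrix κ ι R} (hB : B * Bdag * B = B) (x : κ → R) :
    B *ᵥ (x - Bdag *ᵥ (B *ᵥ x)) = 0 := by
  rw [mulVec_sub, mulVec_mulVec, mulVec_mulVec, hB, sub_self]

theorem evec_sub {k : ℕ} (x y : Fin k → ℝ) : evec (x - y) = evec x - evec y := rfl

theorem norm_evec_mulVec_le {a b : ℕ} (M : Matrix (Fin a) (Fin b) ℝ) (x : Fin b → ℝ) :
    ‖evec (M *ᵥ x)‖ ≤ matOpNorm M * ‖evec x‖ :=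
  (Matrix.toEuclideanLin M).toContinuousLinearMap.le_opNorm (evec x)

theorem IsMinOn.le_evec_add_smul {n m : ℕ} {c : EuclideanSpace ℝ (Fin m) → ℝ}
    {B : Matrix (Fin n) (Fin m) ℝ} {b : Fin n → ℝ} {v z : Fin m → ℝ}
    (hmin : IsMinOn (fun u => c (evec u)) {u | B *ᵥ u = b} v) (hv : B *ᵥ v = b)
    (hz : B *ᵥ z = 0) (t : ℝ) : c (evec v) ≤ c (evec v + t • evec z) :=
  hmin (show B *ᵥ (v + t • z) = b by rw [mulVec_add, mulVec_smul, hv, hz, smul_zero, add_zero])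

theorem sq_le_of_mul_le_pow_three_mul_add {μ L s a b : ℝ} (hμ : 0 < μ) (hs : 0 ≤ s)
    (h : μ * s ≤ L ^ 3 * (a + b)) : s ^ 2 ≤ (4 * L ^ 6 / μ ^ 2) * (a ^ 2 + b ^ 2) := by
  rw [div_mul_eq_mul_div, le_div_iff₀ (by positivity)]
  nlinarith [pow_le_pow_left₀ (by positivity) h 2,
    mul_nonneg (pow_two_nonneg (L ^ 3)) (sq_nonneg (a - b)),
    mul_nonneg (pow_two_nonneg (L ^ 3)) (add_nonneg (sq_nonneg a) (sq_nonneg b))]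

/-- One-step terminal problem sensitivity: for `c` μ-strongly convex and `L`-smooth,
`‖B†‖ ≤ L`, `‖A‖ ≤ L`, the minimizers `v, v'` of `c` over the affine feasible sets
`{v : x_{t+1} = A x_t + B v + w_t}` and `{v : x_{t+1}' = A x_t' + B v + w_t}` satisfy
`‖v - v'‖² ≤ (4L⁶/μ²)(‖x_t - x_t'‖² + ‖x_{t+1} - x_{t+1}'‖²)`. -/
theorem stmt_16 {n m : ℕ} (c : EuclideanSpace ℝ (Fin m) → ℝ) (μ L : ℝ)
    (hμ : 0 < μ) (hL : 1 < L)
    (hsc : StrongConvexOn Set.univ μ c)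
    (hdiff : ContDiff ℝ 2 c)
    (hsmooth : LipschitzWith (Real.toNNReal L) (gradient c))
    (A : Matrix (Fin n) (Fin n) ℝ) (B : Matrix (Fin n) (Fin m) ℝ)
    (Bdag : Matrix (Fin m) (Fin n) ℝ)
    (hMP : IsMoorePenrose B Bdag)
    (hBdag : matOpNorm Bdag ≤ L) (hA : matOpNorm A ≤ L)
    (xt xt' xt1 xt1' wt : Fin n → ℝ) (v v' : Fin m → ℝ)
    (hvfeas : B.mulVec v = xt1 - A.mulVec xt - wt)
    (hvmin : IsMinOn (fun u : Fin m → ℝ => c (evec u))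
      {u : Fin m → ℝ | B.mulVec u = xt1 - A.mulVec xt - wt} v)
    (hv'feas : B.mulVec v' = xt1' - A.mulVec xt' - wt)
    (hv'min : IsMinOn (fun u : Fin m → ℝ => c (evec u))
      {u : Fin m → ℝ | B.mulVec u = xt1' - A.mulVec xt' - wt} v') :
    ‖evec (v - v')‖ ^ 2 ≤
      (4 * L ^ 6 / μ ^ 2) * (‖evec (xt - xt')‖ ^ 2 + ‖evec (xt1 - xt1')‖ ^ 2) := by
  have hL0 : 0 ≤ L := by linarith
  set a := ‖evec (xt - xt')‖
  set b := ‖evec (xt1 - xt1')‖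
  set d := Bdag *ᵥ (B *ᵥ (v - v'))
  have hz := Matrix.mulVec_sub_mulVec_mulVec_eq_zero hMP.1 (v - v')
  have hsens : μ * ‖evec (v - v')‖ ≤ L * ‖evec d‖ := by
    simpa only [Real.coe_toNNReal L hL0, evec_sub] using
      hsc.mul_norm_sub_le_of_forall_le_add_smul (hdiff.differentiable (by norm_num)) hsmooth
        (d := evec d) (by simp [evec, d]) (hvmin.le_evec_add_smul hvfeas hz)
        (hv'min.le_evec_add_smul hv'feas hz)
  have hBΔ : B *ᵥ (v - v') = (xt1 - xt1') - A *ᵥ (xt - xt') := by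
    rw [mulVec_sub, hvfeas, hv'feas, mulVec_sub]
    abel
  have hd : ‖evec d‖ ≤ L * (b + L * a) :=
    calc ‖evec d‖ ≤ matOpNorm Bdag * ‖evec (B *ᵥ (v - v'))‖ := norm_evec_mulVec_le _ _
      _ ≤ L * (b + matOpNorm A * a) := by
        gcongr
        rw [hBΔ, evec_sub]
        exact (norm_sub_le _ _).trans (add_le_add le_rfl (norm_evec_mulVec_le _ _))
      _ ≤ L * (b + L * a) := by gcongr
  refine sq_le_of_mul_le_pow_three_mul_add hμ (norm_nonneg _) ?_
  calc μ * ‖evec (v - v')‖ ≤ L * (L * (b + L * a)) := hsens.trans (by gcongr)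
    _ ≤ L ^ 3 * (a + b) := by
      nlinarith [mul_nonneg (mul_nonneg (sq_nonneg L) (norm_nonneg _ : 0 ≤ b)) (sub_nonneg.2 hL.le)]
end
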